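/- arXiv:2509.00927 — 2 statements merged into one kernel-verified Lean document; each statement's English description precedes it below -/
import Mathlib

section
/- Let v : ℝ² → ℝ be continuous, nonnegative, harmonic on the open set {v > 0}, and homogeneous of degree 1 (i.e. v(rX) = r·v(X) for all r > 0 and X ∈ ℝ²). If v is not identically zero, then there exist a unit vector ν ∈ ℝ² and constants A₊ ≥ 0, A₋ ≥ 0, not both zero, such that v(X) = A₊·max(X·ν, 0) + A₋·max(−X·ν, 0) for all X. -/
/-- The Laplacian of a function on `ℝ²` (Euclidean). -/
noncomputable def lap2 (v : EuclideanSpace ℝ (Fin 2) → ℝ) (X : EuclideanSpace ℝ (Fin 2)) : ℝ :=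
  ∑ i : Fin 2, fderiv ℝ (fun Y => fderiv ℝ v Y (EuclideanSpace.single i 1)) X
    (EuclideanSpace.single i 1)

open Metric Set

section StmtTwoAux

variable {v : EuclideanSpace ℝ (Fin 2) → ℝ}

/-- Two linear functionals with disjoint positivity half-planes are antiparallel. -/
lemma stmt2_antipar {E : Type*} [NormedAddCommGroup E] [InnerProductSpace ℝ E]
    {α β : E} (hα : α ≠ 0) (hβ : β ≠ 0)
    (h : ∀ Y, 0 < (inner ℝ α Y : ℝ) → ¬ 0 < (inner ℝ β Y : ℝ)) :
    β = -(‖β‖ / ‖α‖) • α := by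
  have hαn : 0 < ‖α‖ := norm_pos_iff.mpr hα
  have hβn : 0 < ‖β‖ := norm_pos_iff.mpr hβ
  have hab : (inner ℝ α β : ℝ) ≤ -(‖α‖ * ‖β‖) := by
    by_contra hlt
    push_neg at hlt
    set Y := ‖β‖ • α + ‖α‖ • β with hY
    have h1 : 0 < (inner ℝ α Y : ℝ) := by
      rw [hY, inner_add_right, real_inner_smul_right, real_inner_smul_right,
        real_inner_self_eq_norm_sq]
      nlinarith
    have h2 : 0 < (inner ℝ β Y : ℝ) := by
      rw [hY, inner_add_right, real_inner_smul_right, real_inner_smul_right,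
        real_inner_self_eq_norm_sq, real_inner_comm]
      nlinarith
    exact h Y h1 h2
  have hcs : |(inner ℝ α β : ℝ)| ≤ ‖α‖ * ‖β‖ := abs_real_inner_le_norm α β
  have heq : (inner ℝ α β : ℝ) = -(‖α‖ * ‖β‖) := by
    rcases abs_le.mp hcs with ⟨h1, _⟩
    linarith
  have hzero : ‖β‖ • α + ‖α‖ • β = 0 := by
    have hn2 : ‖‖β‖ • α + ‖α‖ • β‖ ^ 2 = 0 := by
      rw [norm_add_sq_real, real_inner_smul_left, real_inner_smul_right, heq,
        norm_smul, norm_smul]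
      simp [abs_of_pos hαn, abs_of_pos hβn]
      ring
    have := pow_eq_zero_iff (n := 2) (by norm_num) |>.mp hn2
    exact norm_eq_zero.mp this
  have h5 : ‖α‖ • β = -(‖β‖ • α) := by
    rw [eq_neg_iff_add_eq_zero, add_comm]
    exact hzero
  have hinj := smul_right_injective E (ne_of_gt hαn)
  apply hinj
  show ‖α‖ • β = ‖α‖ • (-(‖β‖ / ‖α‖) • α)
  rw [h5, neg_smul, smul_neg, smul_smul, mul_div_cancel₀ _ (ne_of_gt hαn)]

/-- The gradient of `v` is zero-homogeneous on the positivity set. -/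
lemma stmt2_fderiv_hom (hc : Continuous v)
    (hC2 : ContDiffOn ℝ 2 v {X | 0 < v X})
    (hhom : ∀ r : ℝ, 0 < r → ∀ X, v (r • X) = r * v X)
    {X : EuclideanSpace ℝ (Fin 2)} (hX : 0 < v X) {r : ℝ} (hr : 0 < r) :
    fderiv ℝ v (r • X) = fderiv ℝ v X := by
  have hU : IsOpen {X | 0 < v X} := isOpen_lt continuous_const hc
  have hd : ∀ Z, 0 < v Z → DifferentiableAt ℝ v Z := fun Z hZ =>
    (hC2.contDiffAt (hU.mem_nhds hZ)).differentiableAt (by norm_num)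
  have hrX : 0 < v (r • X) := by rw [hhom r hr]; positivity
  have h1 : HasFDerivAt (fun Y => v (r • Y))
      ((fderiv ℝ v (r • X)).comp (r • ContinuousLinearMap.id ℝ _)) X := by
    have : HasFDerivAt (fun Y : EuclideanSpace ℝ (Fin 2) => r • Y)
        (r • ContinuousLinearMap.id ℝ _) X :=
      (r • ContinuousLinearMap.id ℝ (EuclideanSpace ℝ (Fin 2))).hasFDerivAt
    exact ((hd _ hrX).hasFDerivAt).comp X this
  have h2 : HasFDerivAt (fun Y => v (r • Y)) (r • fderiv ℝ v X) X := by
    have : (fun Y => v (r • Y)) = fun Y => r * v Y := by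
      funext Y; exact hhom r hr Y
    rw [this]
    exact ((hd X hX).hasFDerivAt).const_mul r
  have := h1.unique h2
  ext w
  have h3 := congrFun (congrArg (fun (L : _ →L[ℝ] ℝ) => (L : _ → ℝ)) this) w
  simp only [ContinuousLinearMap.comp_apply, ContinuousLinearMap.smul_apply,
    ContinuousLinearMap.id_apply, smul_eq_mul] at h3
  rw [map_smul, smul_eq_mul] at h3
  exact mul_left_cancel₀ (ne_of_gt hr) h3

/-- The radial second derivative vanishes. -/
lemma stmt2_snd_radial (hc : Continuous v)
    (hC2 : ContDiffOn ℝ 2 v {X | 0 < v X})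
    (hhom : ∀ r : ℝ, 0 < r → ∀ X, v (r • X) = r * v X)
    {X : EuclideanSpace ℝ (Fin 2)} (hX : 0 < v X) :
    fderiv ℝ (fderiv ℝ v) X X = 0 := by
  have hU : IsOpen {X | 0 < v X} := isOpen_lt continuous_const hc
  have hφ : DifferentiableAt ℝ (fderiv ℝ v) X := by
    have := (hC2.contDiffAt (hU.mem_nhds hX)).fderiv_right (m := 1) (by norm_num)
    exact this.differentiableAt (by norm_num)
  have hψ : HasDerivAt (fun r : ℝ => r • X) X 1 := by
    simpa using (hasDerivAt_id (1:ℝ)).smul_const X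
  have hcomp : HasDerivAt (fun r : ℝ => fderiv ℝ v (r • X)) (fderiv ℝ (fderiv ℝ v) X X) 1 := by
    have h1 : HasFDerivAt (fderiv ℝ v) (fderiv ℝ (fderiv ℝ v) X) ((1:ℝ) • X) := by
      simpa using hφ.hasFDerivAt
    exact h1.comp_hasDerivAt (x := (1:ℝ)) hψ
  have hconst : (fun r : ℝ => fderiv ℝ v (r • X)) =ᶠ[nhds (1:ℝ)] fun _ => fderiv ℝ v X := by
    filter_upwards [eventually_gt_nhds (by norm_num : (0:ℝ) < 1)] with r hr
    exact stmt2_fderiv_hom hc hC2 hhom hX hr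
  have h0 : HasDerivAt (fun r : ℝ => fderiv ℝ v (r • X)) 0 1 :=
    (hasDerivAt_const (1:ℝ) (fderiv ℝ v X)).congr_of_eventuallyEq hconst
  exact hcomp.unique h0

/-- The full Hessian vanishes on the positivity set. -/
lemma stmt2_hessian_zero (hc : Continuous v)
    (hC2 : ContDiffOn ℝ 2 v {X | 0 < v X})
    (hharm : ∀ X, 0 < v X → lap2 v X = 0)
    (hhom : ∀ r : ℝ, 0 < r → ∀ X, v (r • X) = r * v X)
    {X : EuclideanSpace ℝ (Fin 2)} (hX : 0 < v X) :
    fderiv ℝ (fderiv ℝ v) X = 0 := by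
  have hU : IsOpen {X | 0 < v X} := isOpen_lt continuous_const hc
  have hd : ∀ Z, 0 < v Z → DifferentiableAt ℝ v Z := fun Z hZ =>
    (hC2.contDiffAt (hU.mem_nhds hZ)).differentiableAt (by norm_num)
  have hφ : DifferentiableAt ℝ (fderiv ℝ v) X :=
    ((hC2.contDiffAt (hU.mem_nhds hX)).fderiv_right (m := 1) (by norm_num)).differentiableAt
      (by norm_num)
  set B := fderiv ℝ (fderiv ℝ v) X with hB
  have hsymm : ∀ u w, B u w = B w u := by
    intro u w
    apply second_derivative_symmetric_of_eventually (f := v) (f' := fderiv ℝ v)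
    · filter_upwards [hU.mem_nhds hX] with Z hZ
      exact (hd Z hZ).hasFDerivAt
    · exact hφ.hasFDerivAt
  have htr : B (EuclideanSpace.single 0 1) (EuclideanSpace.single 0 1)
      + B (EuclideanSpace.single 1 1) (EuclideanSpace.single 1 1) = 0 := by
    have hlap := hharm X hX
    unfold lap2 at hlap
    have heval : ∀ w u : EuclideanSpace ℝ (Fin 2),
        fderiv ℝ (fun Y => fderiv ℝ v Y w) X u = B u w := by
      intro w u
      have h1 : (fun Y => fderiv ℝ v Y w)
          = (ContinuousLinearMap.apply ℝ ℝ w) ∘ (fderiv ℝ v) := rfl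
      rw [h1, fderiv_comp X ((ContinuousLinearMap.apply ℝ ℝ w).differentiableAt) hφ,
        ContinuousLinearMap.fderiv]
      rfl
    rw [Fin.sum_univ_two] at hlap
    rw [← heval, ← heval]
    exact hlap
  have hdec : ∀ u : EuclideanSpace ℝ (Fin 2),
      u = u 0 • EuclideanSpace.single 0 1 + u 1 • EuclideanSpace.single 1 1 := by
    intro u
    ext i
    fin_cases i <;>
      simp [EuclideanSpace.single_apply, PiLp.add_apply, PiLp.smul_apply]
  set e0 : EuclideanSpace ℝ (Fin 2) := EuclideanSpace.single 0 1
  set e1 : EuclideanSpace ℝ (Fin 2) := EuclideanSpace.single 1 1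
  set p := B e0 e0
  set q := B e0 e1
  set s := B e1 e1
  have hq : B e1 e0 = q := hsymm e1 e0
  have hXne : X ≠ 0 := by
    rintro rfl
    have h := hhom 2 (by norm_num) 0
    rw [smul_zero] at h
    nlinarith
  have hX01 : X 0 ≠ 0 ∨ X 1 ≠ 0 := by
    by_contra h
    push_neg at h
    exact hXne (by ext i; fin_cases i <;> simp [h.1, h.2])
  have hexp : ∀ u w : EuclideanSpace ℝ (Fin 2),
      B u w = u 0 * w 0 * p + u 0 * w 1 * q + u 1 * w 0 * q + u 1 * w 1 * s := by
    intro u w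
    conv_lhs => rw [hdec u, hdec w]
    simp [map_add, map_smul, hq, p, q, s]
    ring
  have hBX0 : B X e0 = 0 := by rw [stmt2_snd_radial hc hC2 hhom hX]; rfl
  have hBX1 : B X e1 = 0 := by rw [stmt2_snd_radial hc hC2 hhom hX]; rfl
  rw [hexp] at hBX0 hBX1
  have he00 : (e0 : EuclideanSpace ℝ (Fin 2)) 0 = 1 := by simp [e0]
  have he01 : (e0 : EuclideanSpace ℝ (Fin 2)) 1 = 0 := by simp [e0]
  have he10 : (e1 : EuclideanSpace ℝ (Fin 2)) 0 = 0 := by simp [e1]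
  have he11 : (e1 : EuclideanSpace ℝ (Fin 2)) 1 = 1 := by simp [e1]
  rw [he00, he01] at hBX0
  rw [he10, he11] at hBX1
  have e1' : X 0 * p + X 1 * q = 0 := by linear_combination hBX0
  have e2' : X 0 * q + X 1 * s = 0 := by linear_combination hBX1
  have hX2 : 0 < X 0 ^ 2 + X 1 ^ 2 := by
    rcases hX01 with h | h <;> positivity
  have hpz : p * (X 0 ^ 2 + X 1 ^ 2) = 0 := by
    linear_combination (X 0) * e1' - (X 1) * e2' + (X 1) ^ 2 * htr
  have hp : p = 0 := by
    rcases mul_eq_zero.mp hpz with h | h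
    · exact h
    · linarith
  have hs : s = 0 := by linarith
  have hq0 : q = 0 := by
    rw [hp] at e1'
    rw [hs] at e2'
    rcases hX01 with h | h
    · have : X 0 * q = 0 := by linarith
      exact (mul_eq_zero.mp this).resolve_left h
    · have : X 1 * q = 0 := by linarith
      exact (mul_eq_zero.mp this).resolve_left h
  have hz : ∀ u w : EuclideanSpace ℝ (Fin 2), B u w = 0 := by
    intro u w
    rw [hexp, hp, hs, hq0]
    ring
  refine ContinuousLinearMap.ext fun u => ContinuousLinearMap.ext fun w => ?_
  simpa using hz u w

/-- Key local structure: near a point of positivity, `v` agrees with its (locally constant)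
differential. -/
lemma stmt2_key (hc : Continuous v)
    (hC2 : ContDiffOn ℝ 2 v {X | 0 < v X})
    (hharm : ∀ X, 0 < v X → lap2 v X = 0)
    (hhom : ∀ r : ℝ, 0 < r → ∀ X, v (r • X) = r * v X)
    {X : EuclideanSpace ℝ (Fin 2)} (hX : 0 < v X) :
    ∃ ε > 0, ∀ Y ∈ ball X ε,
      v Y = fderiv ℝ v X Y ∧ fderiv ℝ v Y = fderiv ℝ v X := by
  have hU : IsOpen {X | 0 < v X} := isOpen_lt continuous_const hc
  have hd : ∀ Z, 0 < v Z → DifferentiableAt ℝ v Z := fun Z hZ =>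
    (hC2.contDiffAt (hU.mem_nhds hZ)).differentiableAt (by norm_num)
  have hφd : ∀ Z, 0 < v Z → DifferentiableAt ℝ (fderiv ℝ v) Z := fun Z hZ =>
    ((hC2.contDiffAt (hU.mem_nhds hZ)).fderiv_right (m := 1) (by norm_num)).differentiableAt
      (by norm_num)
  obtain ⟨ε, hε, hball⟩ := Metric.mem_nhds_iff.mp (hU.mem_nhds hX)
  refine ⟨ε, hε, ?_⟩
  have hbpos : ∀ Y ∈ ball X ε, 0 < v Y := fun Y hY => hball hY
  have hφconst : ∀ Y ∈ ball X ε, fderiv ℝ v Y = fderiv ℝ v X := by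
    intro Y hY
    have h := Convex.norm_image_sub_le_of_norm_fderivWithin_le
      (f := fderiv ℝ v) (C := 0) (s := ball X ε)
      (fun Z hZ => (hφd Z (hbpos Z hZ)).differentiableWithinAt)
      (fun Z hZ => by
        rw [fderivWithin_of_mem_nhds (isOpen_ball.mem_nhds hZ),
          stmt2_hessian_zero hc hC2 hharm hhom (hbpos Z hZ)]
        simp)
      (convex_ball X ε) (mem_ball_self hε) hY
    rw [zero_mul] at h
    exact sub_eq_zero.mp (norm_le_zero_iff.mp h)
  set a := fderiv ℝ v X with ha
  have hψ : ∀ Y ∈ ball X ε, v Y - a Y = v X - a X := by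
    intro Y hY
    have h := Convex.norm_image_sub_le_of_norm_fderivWithin_le
      (f := fun Z => v Z - a Z) (C := 0) (s := ball X ε)
      (fun Z hZ => ((hd Z (hbpos Z hZ)).sub (a.differentiableAt)).differentiableWithinAt)
      (fun Z hZ => by
        rw [fderivWithin_of_mem_nhds (isOpen_ball.mem_nhds hZ),
          fderiv_fun_sub (hd Z (hbpos Z hZ)) a.differentiableAt, a.fderiv,
          hφconst Z hZ, sub_self]
        simp)
      (convex_ball X ε) (mem_ball_self hε) hY
    rw [zero_mul] at h
    have h' : ‖(v Y - a Y) - (v X - a X)‖ ≤ 0 := h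
    have h2 : v Y - a Y - (v X - a X) = 0 := norm_le_zero_iff.mp h'
    linarith
  have hXne : X ≠ 0 := by
    rintro rfl
    have h := hhom 2 (by norm_num) 0
    rw [smul_zero] at h
    nlinarith
  have hXn : 0 < ‖X‖ := norm_pos_iff.mpr hXne
  set r : ℝ := 1 + ε / (2 * ‖X‖) with hr
  have hr1 : 1 < r := by
    rw [hr]
    have : 0 < ε / (2 * ‖X‖) := by positivity
    linarith
  have hrX : r • X ∈ ball X ε := by
    rw [mem_ball, dist_eq_norm]
    have h4 : r • X - X = (r - 1) • X := by rw [sub_smul, one_smul]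
    rw [h4, norm_smul, Real.norm_eq_abs, abs_of_pos (by linarith)]
    have : (r - 1) * ‖X‖ = ε / 2 := by
      rw [hr]
      field_simp
      ring
    rw [this]
    linarith
  have hc0 : v X - a X = 0 := by
    have h1 := hψ (r • X) hrX
    rw [hhom r (by linarith), map_smul, smul_eq_mul] at h1
    have : (r - 1) * (v X - a X) = 0 := by linarith
    rcases mul_eq_zero.mp this with h | h
    · linarith
    · exact h
  intro Y hY
  refine ⟨?_, hφconst Y hY⟩
  have := hψ Y hY
  rw [hc0] at this
  linarith

/-- On the half-plane of positivity of the differential, `v` is that linear function. -/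
lemma stmt2_halfplane (hc : Continuous v)
    (hkey : ∀ X : EuclideanSpace ℝ (Fin 2), 0 < v X → ∃ ε > 0, ∀ Y ∈ ball X ε,
      v Y = fderiv ℝ v X Y ∧ fderiv ℝ v Y = fderiv ℝ v X)
    {X : EuclideanSpace ℝ (Fin 2)} (hX : 0 < v X) :
    ∀ Y, 0 < fderiv ℝ v X Y → v Y = fderiv ℝ v X Y ∧ fderiv ℝ v Y = fderiv ℝ v X := by
  set a := fderiv ℝ v X with ha
  set P : Set (EuclideanSpace ℝ (Fin 2)) := {Y | v Y = a Y ∧ fderiv ℝ v Y = a} with hP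
  set H : Set (EuclideanSpace ℝ (Fin 2)) := {Y | 0 < a Y} with hH
  have hXP : X ∈ P := by
    obtain ⟨ε, hε, hloc⟩ := hkey X hX
    exact ⟨(hloc X (mem_ball_self hε)).1, rfl⟩
  have hXH : X ∈ H := by
    have := hXP.1
    simp only [hH, mem_setOf_eq]
    rw [← this]
    exact hX
  have heqon : EqOn v (⇑a) P := fun Z hZ => hZ.1
  have claim1 : H ∩ P ⊆ interior P := by
    rintro Y ⟨hYH, hYP⟩
    have hvY : 0 < v Y := by rw [hYP.1]; exact hYH
    obtain ⟨ε, hε, hloc⟩ := hkey Y hvY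
    refine mem_interior.mpr ⟨ball Y ε, ?_, isOpen_ball, mem_ball_self hε⟩
    intro Z hZ
    refine ⟨?_, ?_⟩
    · rw [(hloc Z hZ).1, hYP.2]
    · rw [(hloc Z hZ).2, hYP.2]
  have claim2 : H ∩ closure P ⊆ P := by
    rintro Y ⟨hYH, hYc⟩
    have hvYa : v Y = a Y := (heqon.closure hc a.continuous) hYc
    have hvY : 0 < v Y := by rw [hvYa]; exact hYH
    obtain ⟨ε, hε, hloc⟩ := hkey Y hvY
    obtain ⟨Z, hZball, hZP⟩ :=
      _root_.mem_closure_iff.mp hYc (ball Y ε) isOpen_ball (mem_ball_self hε)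
    have hb := (hloc Z hZball).2
    exact ⟨hvYa, by rw [← hb, hZP.2]⟩
  have hHconv : Convex ℝ H := by
    have : IsLinearMap ℝ (⇑a) := ⟨map_add a, map_smul a⟩
    exact convex_halfSpace_gt this 0
  have hsub : H ⊆ closure P := by
    by_contra hcon
    obtain ⟨Y₀, hY₀H, hY₀c⟩ := not_subset.mp hcon
    have hpre := hHconv.isPreconnected
    have h3 := hpre (interior P) (closure P)ᶜ isOpen_interior isClosed_closure.isOpen_compl
      (fun Z hZ => by
        by_cases h : Z ∈ closure P
        · exact Or.inl (claim1 ⟨hZ, claim2 ⟨hZ, h⟩⟩)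
        · exact Or.inr h)
      ⟨X, hXH, claim1 ⟨hXH, hXP⟩⟩
      ⟨Y₀, hY₀H, hY₀c⟩
    obtain ⟨Z, _, hZi, hZc⟩ := h3
    exact hZc (subset_closure (interior_subset hZi))
  intro Y hY
  exact claim2 ⟨hY, hsub hY⟩

end StmtTwoAux

set_option maxHeartbeats 2000000 in
theorem stmt2 (v : EuclideanSpace ℝ (Fin 2) → ℝ) (hc : Continuous v)
    (hnn : ∀ X, 0 ≤ v X)
    (hC2 : ContDiffOn ℝ 2 v {X | 0 < v X})
    (hharm : ∀ X, 0 < v X → lap2 v X = 0)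
    (hhom : ∀ r : ℝ, 0 < r → ∀ X, v (r • X) = r * v X)
    (hne : v ≠ 0) :
    ∃ (ν : EuclideanSpace ℝ (Fin 2)) (Ap Am : ℝ), ‖ν‖ = 1 ∧ 0 ≤ Ap ∧ 0 ≤ Am ∧
      ¬(Ap = 0 ∧ Am = 0) ∧
      ∀ X, v X = Ap * max (inner ℝ X ν : ℝ) 0 + Am * max (-(inner ℝ X ν : ℝ)) 0 := by
  classical
  have hkey : ∀ X : EuclideanSpace ℝ (Fin 2), 0 < v X → ∃ ε > 0, ∀ Y ∈ ball X ε,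
      v Y = fderiv ℝ v X Y ∧ fderiv ℝ v Y = fderiv ℝ v X :=
    fun X hX => stmt2_key hc hC2 hharm hhom hX
  have hhp : ∀ X : EuclideanSpace ℝ (Fin 2), 0 < v X →
      ∀ Y, 0 < fderiv ℝ v X Y → v Y = fderiv ℝ v X Y ∧ fderiv ℝ v Y = fderiv ℝ v X :=
    fun X hX => stmt2_halfplane hc hkey hX
  have heuler : ∀ Z, 0 < v Z → fderiv ℝ v Z Z = v Z := by
    intro Z hZ
    obtain ⟨ε, hε, hloc⟩ := hkey Z hZ
    exact ((hloc Z (mem_ball_self hε)).1).symm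
  have hdisj : ∀ Z₁ Z₂, 0 < v Z₁ → 0 < v Z₂ → fderiv ℝ v Z₁ ≠ fderiv ℝ v Z₂ →
      ∀ Y, 0 < fderiv ℝ v Z₁ Y → ¬ 0 < fderiv ℝ v Z₂ Y := by
    intro Z₁ Z₂ h1 h2 hne' Y hY1 hY2
    exact hne' ((((hhp Z₁ h1) Y hY1).2).symm.trans (((hhp Z₂ h2) Y hY2).2))
  obtain ⟨X₀, hX₀⟩ : ∃ X, v X ≠ 0 := Function.ne_iff.mp hne
  have hv0 : 0 < v X₀ := lt_of_le_of_ne (hnn X₀) (Ne.symm hX₀)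
  set a := fderiv ℝ v X₀ with ha
  have haX₀ : a X₀ = v X₀ := heuler X₀ hv0
  have hane : a ≠ 0 := by
    intro h
    rw [h] at haX₀
    simp at haX₀
    exact hX₀ haX₀.symm
  set dualIso := InnerProductSpace.toDual ℝ (EuclideanSpace ℝ (Fin 2)) with hdualIso
  -- representation of functionals by vectors
  have hrep : ∀ L : EuclideanSpace ℝ (Fin 2) →L[ℝ] ℝ, ∀ Y,
      (inner ℝ (dualIso.symm L) Y : ℝ) = L Y := by
    intro L Y
    have h1 : (inner ℝ (dualIso.symm L) Y : ℝ) = dualIso (dualIso.symm L) Y := rfl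
    rw [h1, dualIso.apply_symm_apply]
  have hrepne : ∀ L : EuclideanSpace ℝ (Fin 2) →L[ℝ] ℝ, L ≠ 0 → dualIso.symm L ≠ 0 := by
    intro L hL h
    apply hL
    rw [← dualIso.apply_symm_apply L, h, map_zero]
  set α := dualIso.symm a with hα
  have hαne : α ≠ 0 := hrepne a hane
  have hαn : 0 < ‖α‖ := norm_pos_iff.mpr hαne
  set ν : EuclideanSpace ℝ (Fin 2) := ‖α‖⁻¹ • α with hν
  have hνn : ‖ν‖ = 1 := by
    rw [hν, norm_smul, Real.norm_eq_abs, abs_of_pos (by positivity)]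
    field_simp
  have hinner : ∀ X, (inner ℝ X ν : ℝ) = ‖α‖⁻¹ * a X := by
    intro X
    rw [hν, real_inner_smul_right, real_inner_comm, hrep]
  by_cases hcase : ∀ Y, a Y ≤ 0 → v Y = 0
  · refine ⟨ν, ‖α‖, 0, hνn, le_of_lt hαn, le_refl 0, fun h => absurd h.1 (ne_of_gt hαn), ?_⟩
    intro X
    rcases le_or_gt (a X) 0 with h | h
    · rw [hcase X h, hinner]
      have h1 : ‖α‖⁻¹ * a X ≤ 0 :=
        mul_nonpos_of_nonneg_of_nonpos (by positivity) h
      rw [max_eq_right h1]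
      ring
    · rw [(hhp X₀ hv0 X h).1, hinner]
      have h1 : 0 < ‖α‖⁻¹ * a X := by positivity
      rw [max_eq_left (le_of_lt h1)]
      field_simp
      simp only [ha]
      ring
  · push_neg at hcase
    obtain ⟨X₁, hX₁a, hX₁v⟩ := hcase
    have hv1 : 0 < v X₁ := lt_of_le_of_ne (hnn X₁) (Ne.symm hX₁v)
    set b := fderiv ℝ v X₁ with hb
    have hbX₁ : b X₁ = v X₁ := heuler X₁ hv1
    have hbnea : b ≠ a := by
      intro h
      rw [h] at hbX₁
      linarith
    have hbne : b ≠ 0 := by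
      intro h
      rw [h] at hbX₁
      simp at hbX₁
      exact hX₁v hbX₁.symm
    set β := dualIso.symm b with hβ
    have hβne : β ≠ 0 := hrepne b hbne
    have hβnorm : 0 < ‖β‖ := norm_pos_iff.mpr hβne
    obtain ⟨t, ht, hβα⟩ : ∃ t : ℝ, 0 < t ∧ β = -t • α := by
      refine ⟨‖β‖ / ‖α‖, div_pos hβnorm hαn, ?_⟩
      apply stmt2_antipar hαne hβne
      intro Y h1 h2
      rw [hrep] at h1 h2
      exact hdisj X₀ X₁ hv0 hv1 (Ne.symm hbnea) Y h1 h2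
    have hbY : ∀ Y, b Y = -t * a Y := by
      intro Y
      have h1 : (inner ℝ β Y : ℝ) = b Y := hrep b Y
      have h2 : (inner ℝ β Y : ℝ) = -t * a Y := by
        rw [hβα, real_inner_smul_left, hrep]
      rw [← h1, h2]
    -- vanishing on the separating line
    have hline : ∀ Y, a Y = 0 → v Y = 0 := by
      intro Y h0
      by_contra hvy
      have hvY : 0 < v Y := lt_of_le_of_ne (hnn Y) (Ne.symm hvy)
      set c := fderiv ℝ v Y with hcY'
      have hcY : c Y = v Y := heuler Y hvY
      have hcnea : c ≠ a := by
        intro h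
        rw [h, h0] at hcY
        linarith
      have hcneb : c ≠ b := by
        intro h
        rw [h, hbY, h0] at hcY
        simp at hcY
        linarith
      have hcne : c ≠ 0 := by
        intro h
        rw [h] at hcY
        simp at hcY
        linarith
      set γ := dualIso.symm c with hγ
      have hγne : γ ≠ 0 := hrepne c hcne
      have hγnorm : 0 < ‖γ‖ := norm_pos_iff.mpr hγne
      obtain ⟨s1, hs1, hγα⟩ : ∃ s : ℝ, 0 < s ∧ γ = -s • α := by
        refine ⟨‖γ‖ / ‖α‖, div_pos hγnorm hαn, ?_⟩
        apply stmt2_antipar hαne hγne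
        intro Z h1 h2
        rw [hrep] at h1 h2
        exact hdisj X₀ Y hv0 hvY (Ne.symm hcnea) Z h1 h2
      obtain ⟨s2, hs2, hγβ⟩ : ∃ s : ℝ, 0 < s ∧ γ = -s • β := by
        refine ⟨‖γ‖ / ‖β‖, div_pos hγnorm hβnorm, ?_⟩
        apply stmt2_antipar hβne hγne
        intro Z h1 h2
        rw [hrep] at h1 h2
        exact hdisj X₁ Y hv1 hvY (Ne.symm hcneb) Z h1 h2
      rw [hβα, smul_smul, hγα] at hγβ
      have hinner2 := congrArg (fun z => (inner ℝ α z : ℝ)) hγβ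
      simp only [real_inner_smul_right] at hinner2
      have hαsq : (inner ℝ α α : ℝ) = ‖α‖ ^ 2 := real_inner_self_eq_norm_sq α
      rw [hαsq] at hinner2
      nlinarith [hinner2, mul_pos hs1 (pow_pos hαn 2), mul_pos (mul_pos hs2 ht) (pow_pos hαn 2)]
    refine ⟨ν, ‖α‖, t * ‖α‖, hνn, le_of_lt hαn, by positivity,
      fun h => absurd h.1 (ne_of_gt hαn), ?_⟩
    intro X
    rcases lt_trichotomy (a X) 0 with h | h | h
    · have hbX : 0 < b X := by
        rw [hbY]
        nlinarith
      rw [(hhp X₁ hv1 X hbX).1, hbY, hinner]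
      have hα0 : (‖α‖ : ℝ) ≠ 0 := ne_of_gt hαn
      have h1 : ‖α‖⁻¹ * a X < 0 := by
        have h2 : 0 < ‖α‖⁻¹ := by positivity
        nlinarith
      rw [max_eq_right (le_of_lt h1), max_eq_left (by linarith)]
      field_simp
      ring
    · rw [hline X h, hinner, h]
      simp
    · rw [(hhp X₀ hv0 X h).1, hinner]
      have h1 : 0 < ‖α‖⁻¹ * a X := by positivity
      rw [max_eq_left (le_of_lt h1), max_eq_right (by linarith)]
      have hα0 : (‖α‖ : ℝ) ≠ 0 := ne_of_gt hαn
      field_simp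
      simp only [ha]
      ring
end

section
/- Let ψ : A → ℝ be C¹ on the annulus A = B_9 \ B_2 ⊂ ℝ², let Y₀ ∈ B_1, N_X, N_Y ∈ ℝ, and suppose ∫_A |∇ψ(X)·(X) − N_X ψ(X)|² dX ≤ δ and ∫_{A−Y₀+Y₀} (shifted annulus) |∇ψ(X)·(X−Y₀) − N_Y ψ(X)|² dX ≤ δ with both annuli contained in B_{10}. If for X ∈ B_8 \ B_3 and t ∈ [0,1] the segment X + tY₀ stays in B_9 \ B_2, then ∫_{B_8 \ B_3} |ψ(X + Y₀)e^{N_Y − N_X} − ψ(X)|² dX ≤ C·e^{2|N_Y−N_X|}·∫_{B_9 \ B_2} |∇ψ(X)·Y₀ − (N_X − N_Y)ψ(X)|² dX for an absolute constant C. -/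
open MeasureTheory Metric Set

/-- Cauchy–Schwarz / Jensen for a probability measure: `(∫ f)² ≤ ∫ f²`. -/
lemma sq_integral_le_prob {μ : Measure ℝ} [IsProbabilityMeasure μ] {f : ℝ → ℝ}
    (hf : Integrable f μ) (hf2 : Integrable (fun t => f t ^ 2) μ) :
    (∫ t, f t ∂μ) ^ 2 ≤ ∫ t, f t ^ 2 ∂μ := by
  set m := ∫ t, f t ∂μ with hm
  have h0 : 0 ≤ ∫ t, (f t - m) ^ 2 ∂μ := integral_nonneg fun t => sq_nonneg _
  have hexp : (fun t => (f t - m) ^ 2) = fun t => (f t ^ 2 - (2 * m) * f t) + m ^ 2 := by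
    funext t; ring
  rw [hexp] at h0
  have h1 : ∫ t, (f t ^ 2 - (2 * m) * f t + m ^ 2) ∂μ
      = (∫ t, f t ^ 2 ∂μ) - m ^ 2 := by
    have hint1 : Integrable (fun t => f t ^ 2 - 2 * m * f t) μ :=
      hf2.sub (hf.const_mul _)
    rw [integral_add hint1 (integrable_const _),
      integral_sub hf2 (hf.const_mul _), MeasureTheory.integral_const_mul, integral_const]
    simp only [probReal_univ, one_smul]
    ring
  rw [h1] at h0
  linarith

/-- FTC along segments `X + tY₀` plus Cauchy–Schwarz/Fubini bound:
`∫_{B₈\B₃} |ψ(X+Y₀)e^{N_Y−N_X} − ψ(X)|² ≤ C e^{2|N_Y−N_X|} ∫_{B₉\B₂} |∇ψ·Y₀ − (N_X−N_Y)ψ|²`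
for an absolute constant `C`. -/
theorem stmt11 : ∃ C : ℝ, 0 < C ∧
    ∀ (ψ : ℝ × ℝ → ℝ) (Y₀ : ℝ × ℝ) (NX NY δ : ℝ),
      ContDiffOn ℝ 1 ψ (Metric.ball 0 10) →
      Y₀ ∈ Metric.ball (0 : ℝ × ℝ) 1 → 0 < δ →
      (∫ X in Metric.ball (0 : ℝ × ℝ) 9 \ Metric.ball 0 2,
        (fderiv ℝ ψ X X - NX * ψ X) ^ 2) ≤ δ →
      (∫ X in Metric.ball Y₀ 9 \ Metric.ball Y₀ 2,
        (fderiv ℝ ψ X (X - Y₀) - NY * ψ X) ^ 2) ≤ δ →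
      (∀ X ∈ Metric.ball (0 : ℝ × ℝ) 8 \ Metric.ball 0 3, ∀ t ∈ Set.Icc (0:ℝ) 1,
        X + t • Y₀ ∈ Metric.ball (0 : ℝ × ℝ) 9 \ Metric.ball 0 2) →
      (∫ X in Metric.ball (0 : ℝ × ℝ) 8 \ Metric.ball 0 3,
          (ψ (X + Y₀) * Real.exp (NY - NX) - ψ X) ^ 2)
        ≤ C * Real.exp (2 * |NY - NX|) *
            ∫ X in Metric.ball (0 : ℝ × ℝ) 9 \ Metric.ball 0 2,
              (fderiv ℝ ψ X Y₀ - (NX - NY) * ψ X) ^ 2 := by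
  refine ⟨1, one_pos, ?_⟩
  intro ψ Y₀ NX NY δ hψ hY₀ _ _ _ hseg
  rw [one_mul]
  set c : ℝ := NY - NX with hc
  set A8 : Set (ℝ × ℝ) := ball (0:ℝ×ℝ) 8 \ ball 0 3 with hA8def
  set A92 : Set (ℝ × ℝ) := ball (0:ℝ×ℝ) 9 \ ball 0 2 with hA92def
  set H : ℝ × ℝ → ℝ := fun Z => (fderiv ℝ ψ Z Y₀ - (NX - NY) * ψ Z) ^ 2 with hHdef
  have hopen : IsOpen (ball (0:ℝ×ℝ) 10) := isOpen_ball
  have hA8meas : MeasurableSet A8 := measurableSet_ball.diff measurableSet_ball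
  have hA92meas : MeasurableSet A92 := measurableSet_ball.diff measurableSet_ball
  have hcb9sub : closedBall (0:ℝ×ℝ) 9 ⊆ ball 0 10 := closedBall_subset_ball (by norm_num)
  have hA92sub : A92 ⊆ ball (0:ℝ×ℝ) 10 :=
    (diff_subset.trans (ball_subset_ball (by norm_num)))
  -- differentiability and continuity facts
  have hdiff : ∀ z ∈ ball (0:ℝ×ℝ) 10, HasFDerivAt ψ (fderiv ℝ ψ z) z := fun z hz =>
    ((hψ.contDiffAt (hopen.mem_nhds hz)).differentiableAt one_ne_zero).hasFDerivAt
  have hfdc : ContinuousOn (fun Z => fderiv ℝ ψ Z Y₀) (ball (0:ℝ×ℝ) 10) :=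
    (ContinuousLinearMap.apply ℝ ℝ Y₀).continuous.comp_continuousOn
      (hψ.continuousOn_fderiv_of_isOpen hopen le_rfl)
  have hψc : ContinuousOn ψ (ball (0:ℝ×ℝ) 10) := hψ.continuousOn
  have hHc : ContinuousOn H (ball (0:ℝ×ℝ) 10) :=
    ((hfdc.sub (continuousOn_const.mul hψc)).pow 2)
  have hHnn : ∀ Z, 0 ≤ H Z := fun Z => sq_nonneg _
  have hHint : IntegrableOn H A92 := by
    have : IntegrableOn H (closedBall (0:ℝ×ℝ) 9) :=
      (hHc.mono hcb9sub).integrableOn_compact (isCompact_closedBall _ _)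
    exact this.mono_set (fun x hx => ball_subset_closedBall hx.1)
  haveI hprob : IsProbabilityMeasure (volume.restrict (Icc (0:ℝ) 1)) := by
    constructor
    simp [Real.volume_Icc]
  have hline : ∀ X ∈ A8, ∀ t ∈ Icc (0:ℝ) 1, X + t • Y₀ ∈ ball (0:ℝ×ℝ) 10 :=
    fun X hX t ht => hA92sub (hseg X hX t ht)
  set Φ : ℝ × ℝ → ℝ := fun X => ∫ t in Icc (0:ℝ) 1, H (X + t • Y₀) with hΦdef
  have key : ∀ X ∈ A8, (ψ (X + Y₀) * Real.exp c - ψ X) ^ 2 ≤ Real.exp (2 * |c|) * Φ X := by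
    intro X hX
    have hlc : Continuous (fun t : ℝ => X + t • Y₀) :=
      continuous_const.add (continuous_id.smul continuous_const)
    have hmem : ∀ t ∈ Icc (0:ℝ) 1, X + t • Y₀ ∈ ball (0:ℝ×ℝ) 10 := hline X hX
    set G : ℝ → ℝ := fun t => (fderiv ℝ ψ (X + t • Y₀) Y₀ + c * ψ (X + t • Y₀)) * Real.exp (c * t) with hGdef
    have hGc : ContinuousOn G (Icc (0:ℝ) 1) := by
      have h1 : ContinuousOn (fun t : ℝ => fderiv ℝ ψ (X + t • Y₀) Y₀) (Icc 0 1) :=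
        hfdc.comp hlc.continuousOn hmem
      have h2 : ContinuousOn (fun t : ℝ => ψ (X + t • Y₀)) (Icc 0 1) :=
        hψc.comp hlc.continuousOn hmem
      exact (h1.add (continuousOn_const.mul h2)).mul
        (Real.continuous_exp.comp (continuous_const.mul continuous_id)).continuousOn
    have hderiv : ∀ t ∈ Icc (0:ℝ) 1,
        HasDerivAt (fun t => ψ (X + t • Y₀) * Real.exp (c * t)) (G t) t := by
      intro t ht
      have hz := hmem t ht
      have hL : HasDerivAt (fun t : ℝ => X + t • Y₀) Y₀ t := by
        simpa using ((hasDerivAt_id t).smul_const Y₀).const_add X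
      have h1 : HasDerivAt (fun t : ℝ => ψ (X + t • Y₀)) (fderiv ℝ ψ (X + t • Y₀) Y₀) t :=
        (hdiff _ hz).comp_hasDerivAt t hL
      have h2 : HasDerivAt (fun t : ℝ => Real.exp (c * t)) (Real.exp (c * t) * c) t := by
        simpa [Function.comp_def] using (Real.hasDerivAt_exp (c * t)).comp t ((hasDerivAt_id t).const_mul c)
      have h3 := h1.mul h2
      have e : G t = fderiv ℝ ψ (X + t • Y₀) Y₀ * Real.exp (c * t) + ψ (X + t • Y₀) * (Real.exp (c * t) * c) := by
        show (fderiv ℝ ψ (X + t • Y₀) Y₀ + c * ψ (X + t • Y₀)) * Real.exp (c * t) = _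
        ring
      rw [e]
      exact h3
    have hFTC : ψ (X + Y₀) * Real.exp c - ψ X = ∫ t in Icc (0:ℝ) 1, G t := by
      have hII : IntervalIntegrable G volume 0 1 := by
        apply ContinuousOn.intervalIntegrable
        rwa [uIcc_of_le (by norm_num : (0:ℝ) ≤ 1)]
      have hs := intervalIntegral.integral_eq_sub_of_hasDerivAt
        (fun t ht => hderiv t (by rwa [uIcc_of_le (by norm_num : (0:ℝ) ≤ 1)] at ht)) hII
      rw [intervalIntegral.integral_of_le (by norm_num : (0:ℝ) ≤ 1),
        ← MeasureTheory.integral_Icc_eq_integral_Ioc] at hs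
      simpa [mul_one, mul_zero, Real.exp_zero] using hs.symm
    rw [hFTC]
    have hGint : Integrable G (volume.restrict (Icc (0:ℝ) 1)) :=
      hGc.integrableOn_compact isCompact_Icc
    have hG2int : Integrable (fun t => G t ^ 2) (volume.restrict (Icc (0:ℝ) 1)) :=
      (hGc.pow 2).integrableOn_compact isCompact_Icc
    refine (sq_integral_le_prob hGint hG2int).trans ?_
    have hbound : ∀ t ∈ Icc (0:ℝ) 1, G t ^ 2 ≤ Real.exp (2 * |c|) * H (X + t • Y₀) := by
      intro t ht
      have h1 : G t ^ 2 = H (X + t • Y₀) * Real.exp (c * t) ^ 2 := by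
        simp only [hGdef, hHdef, hc]
        ring
      have he : Real.exp (c * t) ^ 2 ≤ Real.exp (2 * |c|) := by
        have h2 : Real.exp (c * t) ≤ Real.exp |c| :=
          Real.exp_le_exp.mpr (by nlinarith [le_abs_self c, abs_nonneg c, ht.1, ht.2])
        calc Real.exp (c * t) ^ 2 ≤ Real.exp |c| ^ 2 :=
              pow_le_pow_left₀ (Real.exp_nonneg _) h2 2
          _ = Real.exp (2 * |c|) := by rw [sq, ← Real.exp_add]; ring_nf
      rw [h1]
      nlinarith [hHnn (X + t • Y₀), Real.exp_nonneg (c * t)]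
    have hRint : Integrable (fun t => Real.exp (2 * |c|) * H (X + t • Y₀))
        (volume.restrict (Icc (0:ℝ) 1)) :=
      (continuousOn_const.mul (hHc.comp hlc.continuousOn hmem)).integrableOn_compact
        isCompact_Icc
    calc (∫ t in Icc (0:ℝ) 1, G t ^ 2)
        ≤ ∫ t in Icc (0:ℝ) 1, Real.exp (2 * |c|) * H (X + t • Y₀) :=
          setIntegral_mono_on hG2int hRint measurableSet_Icc hbound
      _ = Real.exp (2 * |c|) * Φ X := by rw [MeasureTheory.integral_const_mul]
  set Q : (ℝ × ℝ) × ℝ → ℝ := fun p => H (p.1 + p.2 • Y₀) with hQdef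
  have hK : IsCompact (closedBall (0:ℝ×ℝ) 8 ×ˢ Icc (0:ℝ) 1) :=
    (isCompact_closedBall _ _).prod isCompact_Icc
  have hY : ‖Y₀‖ < 1 := by simpa [dist_eq_norm] using mem_ball.mp hY₀
  have hmap : ∀ p ∈ closedBall (0:ℝ×ℝ) 8 ×ˢ Icc (0:ℝ) 1,
      p.1 + p.2 • Y₀ ∈ ball (0:ℝ×ℝ) 10 := by
    rintro ⟨x, t⟩ ⟨hx, ht⟩
    have hxn : ‖x‖ ≤ 8 := by simpa [dist_eq_norm] using mem_closedBall.mp hx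
    have h2 : ‖t • Y₀‖ ≤ ‖Y₀‖ := by
      rw [norm_smul, Real.norm_eq_abs, abs_of_nonneg ht.1]
      nlinarith [norm_nonneg Y₀, ht.2]
    rw [mem_ball, dist_eq_norm, sub_zero]
    calc ‖x + t • Y₀‖ ≤ ‖x‖ + ‖t • Y₀‖ := norm_add_le _ _
      _ < 10 := by linarith
  have hQc : ContinuousOn Q (closedBall (0:ℝ×ℝ) 8 ×ˢ Icc (0:ℝ) 1) :=
    hHc.comp (continuous_fst.add (continuous_snd.smul continuous_const)).continuousOn hmap
  have hQint : Integrable Q ((volume.restrict A8).prod (volume.restrict (Icc (0:ℝ) 1))) := by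
    have h1 : IntegrableOn Q (closedBall (0:ℝ×ℝ) 8 ×ˢ Icc (0:ℝ) 1) :=
      hQc.integrableOn_compact hK
    have h2 : IntegrableOn Q (A8 ×ˢ Icc (0:ℝ) 1) :=
      h1.mono_set (prod_mono (fun x hx => ball_subset_closedBall hx.1) subset_rfl)
    rw [IntegrableOn, Measure.volume_eq_prod, ← Measure.prod_restrict] at h2
    exact h2
  have hΦint : Integrable Φ (volume.restrict A8) := hQint.integral_prod_left
  have hswap : (∫ X in A8, Φ X) = ∫ t in Icc (0:ℝ) 1, ∫ X in A8, H (X + t • Y₀) :=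
    MeasureTheory.integral_integral_swap (f := fun X t => H (X + t • Y₀)) hQint
  have htrans : ∀ t ∈ Icc (0:ℝ) 1, (∫ X in A8, H (X + t • Y₀)) ≤ ∫ Z in A92, H Z := by
    intro t ht
    set v := t • Y₀ with hv
    set S : Set (ℝ × ℝ) := (fun x => x + v) '' A8 with hSdef
    have hSmeas : MeasurableSet S := by
      have hSeq : S = (fun x => x - v) ⁻¹' A8 := by
        ext x
        constructor
        · rintro ⟨y, hy, rfl⟩; simpa using hy
        · intro hx; exact ⟨x - v, hx, by simp⟩
      rw [hSeq]
      exact hA8meas.preimage (measurable_id.sub measurable_const)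
    have hind : (A8.indicator fun X => H (X + v)) = fun X => S.indicator H (X + v) := by
      funext X
      by_cases hX : X ∈ A8
      · rw [indicator_of_mem hX, indicator_of_mem (mem_image_of_mem _ hX)]
      · rw [indicator_of_notMem hX, indicator_of_notMem]
        rintro ⟨y, hy, hxy⟩
        exact hX ((add_right_cancel hxy) ▸ hy)
    have heq : (∫ X in A8, H (X + v)) = ∫ Z in S, H Z := by
      rw [← integral_indicator hA8meas, ← integral_indicator hSmeas, hind]
      exact integral_add_right_eq_self (S.indicator H) v
    have hSsub : S ⊆ A92 := by
      rintro x ⟨y, hy, rfl⟩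
      exact hseg y hy t ht
    rw [heq]
    exact setIntegral_mono_set hHint (Filter.Eventually.of_forall fun x => hHnn x)
      (HasSubset.Subset.eventuallyLE hSsub)
  have houter : (∫ t in Icc (0:ℝ) 1, ∫ X in A8, H (X + t • Y₀)) ≤ ∫ Z in A92, H Z := by
    have hintt : Integrable (fun t => ∫ X in A8, H (X + t • Y₀))
        (volume.restrict (Icc (0:ℝ) 1)) := hQint.integral_prod_right
    calc (∫ t in Icc (0:ℝ) 1, ∫ X in A8, H (X + t • Y₀))
        ≤ ∫ _t in Icc (0:ℝ) 1, (∫ Z in A92, H Z) :=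
          setIntegral_mono_on hintt (integrable_const _) measurableSet_Icc htrans
      _ = ∫ Z in A92, H Z := by simp
  have hLc : ContinuousOn (fun Z => (ψ (Z + Y₀) * Real.exp c - ψ Z) ^ 2)
      (closedBall (0:ℝ×ℝ) 8) := by
    have h1 : ∀ z ∈ closedBall (0:ℝ×ℝ) 8, z + Y₀ ∈ ball (0:ℝ×ℝ) 10 := by
      intro z hz
      have hzn : ‖z‖ ≤ 8 := by simpa [dist_eq_norm] using mem_closedBall.mp hz
      rw [mem_ball, dist_eq_norm, sub_zero]
      calc ‖z + Y₀‖ ≤ ‖z‖ + ‖Y₀‖ := norm_add_le _ _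
        _ < 10 := by linarith
    have h2 : ContinuousOn (fun z : ℝ×ℝ => ψ (z + Y₀)) (closedBall (0:ℝ×ℝ) 8) :=
      hψc.comp (continuous_id.add continuous_const).continuousOn h1
    have h3 : ContinuousOn ψ (closedBall (0:ℝ×ℝ) 8) :=
      hψc.mono (closedBall_subset_ball (by norm_num))
    exact ((h2.mul continuousOn_const).sub h3).pow 2
  have hLint : IntegrableOn (fun Z => (ψ (Z + Y₀) * Real.exp c - ψ Z) ^ 2) A8 :=
    (hLc.integrableOn_compact (isCompact_closedBall _ _)).mono_set
      (fun x hx => ball_subset_closedBall hx.1)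
  calc (∫ X in A8, (ψ (X + Y₀) * Real.exp c - ψ X) ^ 2)
      ≤ ∫ X in A8, Real.exp (2 * |c|) * Φ X :=
        setIntegral_mono_on hLint (hΦint.const_mul _) hA8meas key
    _ = Real.exp (2 * |c|) * ∫ X in A8, Φ X := MeasureTheory.integral_const_mul _ _
    _ ≤ Real.exp (2 * |c|) * ∫ Z in A92, H Z := by
        refine mul_le_mul_of_nonneg_left ?_ (Real.exp_nonneg _)
        rw [hswap]
        exact houter
end
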